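/- arXiv:2310.00940 — 6 statements merged into one kernel-verified Lean document; each statement's English description precedes it below -/
import Mathlib

section
/- In a 1-planar drawing of a graph where every edge crosses at most one other edge, if G_0 is a maximal plane subgraph (a subgraph of the drawing with no crossings, with the maximum number of edges), then every edge not in G_0 crosses exactly one edge of G_0. -/
/-- Two drawn edges (unit-distance segments) cross: they are distinct and their
relative interiors share a point. -/
def EdgeCrosses (e f : (ℝ × ℝ) × (ℝ × ℝ)) : Prop :=
  e ≠ f ∧ (openSegment ℝ e.1 e.2 ∩ openSegment ℝ f.1 f.2).Nonempty

/-- A set of drawn edges is plane: its edges are pairwise non-crossing. -/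
def IsPlaneSub (H : Finset ((ℝ × ℝ) × (ℝ × ℝ))) : Prop :=
  ∀ e ∈ H, ∀ f ∈ H, ¬ EdgeCrosses e f

lemma EdgeCrosses.symm {e f : (ℝ × ℝ) × (ℝ × ℝ)} (h : EdgeCrosses e f) :
    EdgeCrosses f e := by
  obtain ⟨hne, x, hx1, hx2⟩ := h
  exact ⟨hne.symm, x, hx2, hx1⟩

/-- In a 1-planar drawing (each edge crosses at most one other edge), if `G0` is a
plane subgraph of the drawing with the maximum number of edges, then every edge
not in `G0` crosses exactly one edge of `G0`. -/
theorem stmt0 (E G0 : Finset ((ℝ × ℝ) × (ℝ × ℝ)))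
    (h1planar : ∀ e ∈ E, ∀ f ∈ E, ∀ g ∈ E, EdgeCrosses e f → EdgeCrosses e g → f = g)
    (hsub : G0 ⊆ E) (hplane : IsPlaneSub G0)
    (hmax : ∀ H ⊆ E, IsPlaneSub H → H.card ≤ G0.card) :
    ∀ e ∈ E, e ∉ G0 → ∃! f, f ∈ G0 ∧ EdgeCrosses e f := by
  intro e heE heG0
  by_cases hex : ∃ f ∈ G0, EdgeCrosses e f
  · obtain ⟨f, hfG0, hef⟩ := hex
    refine ⟨f, ⟨hfG0, hef⟩, ?_⟩
    rintro g ⟨hgG0, heg⟩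
    exact h1planar e heE g (hsub hgG0) f (hsub hfG0) heg hef
  · exfalso
    push_neg at hex
    have hplane' : IsPlaneSub (insert e G0) := by
      intro a ha b hb hab
      simp only [Finset.mem_insert] at ha hb
      rcases ha with rfl | ha <;> rcases hb with rfl | hb
      · exact hab.1 rfl
      · exact hex b hb hab
      · exact hex a ha hab.symm
      · exact hplane a ha b hb hab
    have hsub' : insert e G0 ⊆ E := Finset.insert_subset heE hsub
    have := hmax _ hsub' hplane'
    rw [Finset.card_insert_of_notMem heG0] at this
    omega
end

section
/- A quadrilateral face of a 1-plane drawing can contain at most 2 halfedges: if each side of a convex quadrilateral is crossed by at most one segment connecting a vertex of the quadrilateral to an interior point of a non-adjacent side, and these segments are pairwise non-crossing, then there are at most 2 such segments. -/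
/-!
Halfedges ending on adjacent sides `q s q (s + 1)` and `q (s + 1) q (s + 2)` avoid each other
only if both start at the common opposite vertex `q (s + 3)`. In each of the other three
configurations a sign computation with the orientation determinant shows that the endpoints of
the second halfedge lie strictly on opposite sides of the line through the first; as the first
is a chord of the quadrilateral with both ends on its boundary and the second runs through the
interior, they cross. Three halfedges end on three distinct sides, among which two pairs are
adjacent, so the middle halfedge would have to start at two different vertices.
-/

open Set AffineMap

def orient (a b c : ℝ × ℝ) : ℝ := (b.1 - a.1) * (c.2 - a.2) - (b.2 - a.2) * (c.1 - a.1)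

@[simp] lemma orient_self_left (a b : ℝ × ℝ) : orient a b a = 0 := by simp [orient]

@[simp] lemma orient_self_right (a b : ℝ × ℝ) : orient a b b = 0 := by unfold orient; ring

lemma orient_rotate (a b c : ℝ × ℝ) : orient a b c = orient b c a := by unfold orient; ring

lemma orient_convexComb (a b x y : ℝ × ℝ) {s t : ℝ} (hst : s + t = 1) :
    orient a b (s • x + t • y) = s * orient a b x + t * orient a b y := by
  obtain rfl : s = 1 - t := by linarith
  simp only [orient, Prod.fst_add, Prod.snd_add, Prod.smul_fst, Prod.smul_snd, smul_eq_mul]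
  ring

lemma orient_lineMap (a b : ℝ × ℝ) (r : ℝ) : orient a b (lineMap a b r) = 0 := by
  simp only [lineMap_apply_module, orient, Prod.fst_add, Prod.snd_add, Prod.smul_fst,
    Prod.smul_snd, smul_eq_mul]
  ring

lemma orient_eq_zero_iff {a b p : ℝ × ℝ} (hab : a ≠ b) :
    orient a b p = 0 ↔ p ∈ line[ℝ, a, b] := by
  refine ⟨fun h => ?_, fun h => ?_⟩
  · have hD : (b.1 - a.1) ^ 2 + (b.2 - a.2) ^ 2 ≠ 0 := by
      intro h0
      exact hab (Prod.ext (by nlinarith [sq_nonneg (b.1 - a.1), sq_nonneg (b.2 - a.2)])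
        (by nlinarith [sq_nonneg (b.1 - a.1), sq_nonneg (b.2 - a.2)]))
    refine mem_affineSpan_pair_iff_exists_lineMap_eq.2 ⟨((p.1 - a.1) * (b.1 - a.1) +
      (p.2 - a.2) * (b.2 - a.2)) / ((b.1 - a.1) ^ 2 + (b.2 - a.2) ^ 2), ?_⟩
    unfold orient at h
    rw [lineMap_apply_module']
    ext <;> simp only [Prod.fst_add, Prod.snd_add, Prod.smul_fst, Prod.smul_snd, Prod.fst_sub,
      Prod.snd_sub, smul_eq_mul] <;> field_simp
    · linear_combination (b.2 - a.2) * h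
    · linear_combination -(b.1 - a.1) * h
  · obtain ⟨r, rfl⟩ := mem_affineSpan_pair_iff_exists_lineMap_eq.1 h
    exact orient_lineMap a b r

lemma orient_eq_zero_of_mem_openSegment {a b p : ℝ × ℝ} (hp : p ∈ openSegment ℝ a b) :
    orient a b p = 0 := by
  rw [openSegment_eq_image_lineMap] at hp
  obtain ⟨r, -, rfl⟩ := hp
  exact orient_lineMap a b r

lemma orient_mul_pos_of_sSameSide {a b x y : ℝ × ℝ} (hab : a ≠ b)
    (h : line[ℝ, a, b].SSameSide x y) : 0 < orient a b x * orient a b y := by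
  obtain ⟨hx, hy, p, hp, hray⟩ :=
    (AffineSubspace.sSameSide_iff_exists_left (left_mem_affineSpan_pair ℝ a b)).1 h
  have hx0 : orient a b x ≠ 0 := mt (orient_eq_zero_iff hab).1 hx
  have hp0 : orient a b p = 0 := (orient_eq_zero_iff hab).2 hp
  rcases hray with h0 | h0 | ⟨r₁, r₂, hr₁, hr₂, hr⟩
  · exact (hx (vsub_eq_zero_iff_eq.1 h0 ▸ left_mem_affineSpan_pair ℝ a b)).elim
  · exact (hy (by rwa [vsub_eq_zero_iff_eq.1 h0])).elim
  · have h₁ := congrArg Prod.fst hr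
    have h₂ := congrArg Prod.snd hr
    simp only [vsub_eq_sub, Prod.smul_fst, Prod.smul_snd, Prod.fst_sub, Prod.snd_sub,
      smul_eq_mul] at h₁ h₂
    have key : r₁ * orient a b x = r₂ * orient a b y := by
      unfold orient at hp0 ⊢
      linear_combination (b.1 - a.1) * h₂ - (b.2 - a.2) * h₁ - r₂ * hp0
    refine pos_of_mul_pos_right ?_ hr₂.le
    rw [show r₂ * (orient a b x * orient a b y) = r₁ * orient a b x ^ 2 by
      linear_combination -orient a b x * key]
    exact mul_pos hr₁ (pow_two_pos_of_ne_zero hx0)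

lemma exists_mem_openSegment_orient_eq_zero {a b c d : ℝ × ℝ}
    (h : orient a b c * orient a b d < 0) : ∃ x ∈ openSegment ℝ c d, orient a b x = 0 := by
  -- weights proportional to `|orient a b d|` on `c` and `|orient a b c|` on `d`
  have hd : 0 < orient a b d ^ 2 := pow_two_pos_of_ne_zero (by rintro hd; simp [hd] at h)
  have hcd : 0 < -(orient a b c * orient a b d) := neg_pos.2 h
  refine ⟨_, mem_openSegment_iff_div.2 ⟨_, _, hd, hcd, rfl⟩, ?_⟩
  rw [orient_convexComb _ _ _ _ (by rw [← add_div, div_self (add_pos hd hcd).ne'])]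
  field_simp
  ring

lemma mem_openSegment_of_mem_interior_of_mem_affineSpan {K : Set (ℝ × ℝ)} (hK : Convex ℝ K)
    {a b x : ℝ × ℝ} (hab : a ≠ b) (ha : a ∈ K \ interior K) (hb : b ∈ K \ interior K)
    (hx : x ∈ interior K) (hxab : x ∈ line[ℝ, a, b]) : x ∈ openSegment ℝ a b := by
  have hne : ∀ {z}, z ∉ interior K → x ≠ z := fun hz hxz => hz (hxz ▸ hx)
  have hbtw : ∀ {y z}, y ∈ K → z ∉ interior K → Wbtw ℝ x z y → z = y := fun hy hz h => by
    by_contra hzy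
    exact hz (hK.openSegment_interior_self_subset_interior hx hy
      (mem_openSegment_of_ne_left_right (hne hz) (Ne.symm hzy) (mem_segment_iff_wbtw.2 h)))
  rcases (collinear_insert_of_mem_affineSpan_pair hxab).wbtw_or_wbtw_or_wbtw with h | h | h
  · exact (hab (hbtw hb.1 ha.2 h)).elim
  · exact (hab (hbtw ha.1 hb.2 h.symm).symm).elim
  · rw [openSegment_symm]
    exact mem_openSegment_of_ne_left_right (hne hb.2).symm (hne ha.2).symm
      (mem_segment_iff_wbtw.2 h)

theorem openSegment_inter_nonempty_of_orient_mul_neg {K : Set (ℝ × ℝ)} (hK : Convex ℝ K)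
    {a b c d : ℝ × ℝ} (ha : a ∈ K \ interior K) (hb : b ∈ K \ interior K)
    (hcd : openSegment ℝ c d ⊆ interior K) (h : orient a b c * orient a b d < 0) :
    (openSegment ℝ a b ∩ openSegment ℝ c d).Nonempty := by
  have hab : a ≠ b := by rintro rfl; simp [orient] at h
  obtain ⟨x, hx, hx0⟩ := exists_mem_openSegment_orient_eq_zero h
  exact ⟨x, mem_openSegment_of_mem_interior_of_mem_affineSpan hK hab ha hb (hcd hx)
    ((orient_eq_zero_iff hab).1 hx0), hx⟩

lemma mul_pos_of_mul_pos_of_mul_pos {R : Type*} [CommRing R] [LinearOrder R]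
    [IsStrictOrderedRing R] {a b c : R} (hab : 0 < a * b) (hbc : 0 < b * c) : 0 < a * c := by
  have h : 0 < b ^ 2 * (a * c) := by convert mul_pos hab hbc using 1; ring
  exact pos_of_mul_pos_right h (sq_nonneg b)

lemma convex_setOf_nonneg_mul_orient (a b : ℝ × ℝ) (σ : ℝ) :
    Convex ℝ {p | 0 ≤ σ * orient a b p} := by
  intro x hx y hy s t hs ht hst
  simp only [mem_ofPred_eq, orient_convexComb a b x y hst] at hx hy ⊢
  linear_combination s * hx + t * hy

open Filter Topology in
lemma notMem_interior_of_orient_eq_zero {K : Set (ℝ × ℝ)} {a b z x : ℝ × ℝ} {σ : ℝ}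
    (hK : K ⊆ {p | 0 ≤ σ * orient a b p}) (hz : 0 < σ * orient a b z) (hx : orient a b x = 0) :
    x ∉ interior K := by
  intro hxK
  -- pushing `x` slightly away from `z` leaves the half-plane
  obtain ⟨δ, hδK, hδ⟩ := (((eventually_homothety_mem_of_mem_interior ℝ z hxK).filter_mono
    nhdsWithin_le_nhds).and (self_mem_nhdsWithin (s := Ioi 1))).exists
  have h := hK hδK
  rw [mem_ofPred_eq, homothety_eq_lineMap, lineMap_apply_module,
    orient_convexComb _ _ _ _ (by ring), hx] at h
  nlinarith [show (1 : ℝ) < δ from hδ]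

/- `b` lies on the side `v₀v₁` and `p` on the side `v₁v₂` of a convex quadrilateral `v₀v₁v₂v₃`;
`orient_mul_negᵢⱼ` says that the line through `vᵢ` and `b` separates `vⱼ` from `p`. -/
section AdjacentSides

variable {v₀ v₁ v₂ v₃ b p : ℝ × ℝ} {σ : ℝ}

lemma orient_mul_neg₂₀ (hb : b ∈ openSegment ℝ v₀ v₁) (hp : p ∈ openSegment ℝ v₁ v₂)
    (h : orient v₀ v₁ v₂ ≠ 0) : orient v₂ b v₀ * orient v₂ b p < 0 := by
  rw [openSegment_eq_image] at hb hp
  obtain ⟨t, ⟨ht₀, ht₁⟩, hb⟩ := hb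
  obtain ⟨u, ⟨-, hu₁⟩, hp⟩ := hp
  have hid : orient v₂ b v₀ * orient v₂ b p =
      -(t * (1 - t) * (1 - u) * orient v₀ v₁ v₂ ^ 2) := by
    subst hb hp
    simp only [orient, Prod.fst_add, Prod.snd_add, Prod.smul_fst, Prod.smul_snd, smul_eq_mul]
    ring
  rw [hid]
  exact neg_neg_of_pos (mul_pos (mul_pos (mul_pos ht₀ (sub_pos.2 ht₁)) (sub_pos.2 hu₁))
    (pow_two_pos_of_ne_zero h))

lemma orient_mul_neg₂₃ (hb : b ∈ openSegment ℝ v₀ v₁) (hp : p ∈ openSegment ℝ v₁ v₂)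
    (h₀ : 0 < σ * orient v₀ v₁ v₂) (h₁ : 0 < σ * orient v₁ v₂ v₃)
    (h₂ : 0 < σ * orient v₂ v₃ v₀) : orient v₂ b v₃ * orient v₂ b p < 0 := by
  rw [openSegment_eq_image] at hb hp
  obtain ⟨t, ⟨ht₀, ht₁⟩, hb⟩ := hb
  obtain ⟨u, ⟨-, hu₁⟩, hp⟩ := hp
  have hid : orient v₂ b v₃ * orient v₂ b p = -((1 - t) * (1 - u) * ((1 - t) *
      (orient v₀ v₁ v₂ * orient v₂ v₃ v₀) + t * (orient v₀ v₁ v₂ * orient v₁ v₂ v₃))) := by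
    subst hb hp
    simp only [orient, Prod.fst_add, Prod.snd_add, Prod.smul_fst, Prod.smul_snd, smul_eq_mul]
    ring
  rw [hid]
  have h₀' := h₀.trans_eq (mul_comm _ _)
  exact neg_neg_of_pos (mul_pos (mul_pos (sub_pos.2 ht₁) (sub_pos.2 hu₁))
    (add_pos (mul_pos (sub_pos.2 ht₁) (mul_pos_of_mul_pos_of_mul_pos h₀' h₂))
      (mul_pos ht₀ (mul_pos_of_mul_pos_of_mul_pos h₀' h₁))))

lemma orient_mul_neg₃₀ (hb : b ∈ openSegment ℝ v₀ v₁) (hp : p ∈ openSegment ℝ v₁ v₂)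
    (h₁ : 0 < σ * orient v₁ v₂ v₃) (h₂ : 0 < σ * orient v₂ v₃ v₀)
    (h₃ : 0 < σ * orient v₃ v₀ v₁) : orient v₃ b v₀ * orient v₃ b p < 0 := by
  rw [openSegment_eq_image] at hb hp
  obtain ⟨t, ⟨ht₀, ht₁⟩, hb⟩ := hb
  obtain ⟨u, ⟨hu₀, hu₁⟩, hp⟩ := hp
  have hid : orient v₃ b v₀ * orient v₃ b p = -(t * ((1 - t) * (1 - u) * orient v₃ v₀ v₁ ^ 2 +
        t * u * (orient v₃ v₀ v₁ * orient v₁ v₂ v₃) +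
        (1 - t) * u * (orient v₃ v₀ v₁ * orient v₂ v₃ v₀))) := by
    subst hb hp
    simp only [orient, Prod.fst_add, Prod.snd_add, Prod.smul_fst, Prod.smul_snd, smul_eq_mul]
    ring
  rw [hid]
  have h₃' := h₃.trans_eq (mul_comm _ _)
  have hB := pow_two_pos_of_ne_zero (right_ne_zero_of_mul h₃.ne')
  have hBC := mul_pos_of_mul_pos_of_mul_pos h₃' h₁
  have hBD := mul_pos_of_mul_pos_of_mul_pos h₃' h₂
  exact neg_neg_of_pos (mul_pos ht₀ (add_pos (add_pos
    (mul_pos (mul_pos (sub_pos.2 ht₁) (sub_pos.2 hu₁)) hB) (mul_pos (mul_pos ht₀ hu₀) hBC))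
    (mul_pos (mul_pos (sub_pos.2 ht₁) hu₀) hBD)))

end AdjacentSides

lemma Fin.eq_add_two_or_eq_add_three {s v : Fin 4} (h : s ≠ v ∧ s + 1 ≠ v) :
    v = s + 2 ∨ v = s + 3 := by
  revert s v; decide

lemma Function.Injective.exists_add_one_add_one {N : ℕ} {f : Fin N → Fin 4} (hf : Injective f)
    (hN : 2 < N) : ∃ i j k, f j = f i + 1 ∧ f k = f j + 1 := by
  have key : ∀ S : Finset (Fin 4), 2 < S.card → ∃ m ∈ S, m + 1 ∈ S ∧ m + 1 + 1 ∈ S := by decide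
  obtain ⟨m, hm, hm₁, hm₂⟩ := key (Finset.univ.image f)
    (by rwa [Finset.card_image_of_injective _ hf, Finset.card_univ, Fintype.card_fin])
  simp only [Finset.mem_image, Finset.mem_univ, true_and] at hm hm₁ hm₂
  obtain ⟨i, rfl⟩ := hm
  obtain ⟨j, hj⟩ := hm₁
  obtain ⟨k, hk⟩ := hm₂
  exact ⟨i, j, k, hj, hj ▸ hk⟩

def IsConvexQuad (q : Fin 4 → ℝ × ℝ) : Prop :=
  ∀ i : Fin 4, line[ℝ, q i, q (i + 1)].SSameSide (q (i + 2)) (q (i + 3))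

namespace IsConvexQuad

variable {q : Fin 4 → ℝ × ℝ}

lemma ne_add_one (hq : IsConvexQuad q) (m : Fin 4) : q m ≠ q (m + 1) := by
  intro h
  have hm := (hq (m + 1)).right_notMem
  simp only [add_assoc, Fin.reduceAdd, add_zero] at hm
  exact hm (h ▸ left_mem_affineSpan_pair ℝ _ _)

lemma orient_mul_pos (hq : IsConvexQuad q) (m : Fin 4) :
    0 < orient (q m) (q (m + 1)) (q (m + 2)) * orient (q m) (q (m + 1)) (q (m + 3)) :=
  orient_mul_pos_of_sSameSide (hq.ne_add_one m) (hq m)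

lemma exists_pos_mul_orient (hq : IsConvexQuad q) :
    ∃ σ : ℝ, ∀ m, 0 < σ * orient (q m) (q (m + 1)) (q (m + 2)) := by
  have step : ∀ m, 0 < orient (q m) (q (m + 1)) (q (m + 2)) *
      orient (q (m + 1)) (q (m + 2)) (q (m + 3)) := fun m => by
    have h := hq.orient_mul_pos (m + 1)
    simp only [add_assoc, Fin.reduceAdd, add_zero] at h
    rwa [← orient_rotate (q m), mul_comm] at h
  have h₀ := step 0
  have h₁ := step 1
  have h₂ := step 2
  simp only [zero_add, Fin.reduceAdd] at h₀ h₁ h₂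
  have h₀₂ := mul_pos_of_mul_pos_of_mul_pos h₀ h₁
  refine ⟨orient (q 0) (q 1) (q 2), fun m => ?_⟩
  fin_cases m
  · exact mul_self_pos.2 (left_ne_zero_of_mul h₀.ne')
  · exact h₀
  · exact h₀₂
  · exact mul_pos_of_mul_pos_of_mul_pos h₀₂ h₂

lemma notMem_interior_convexHull (hq : IsConvexQuad q) (m : Fin 4) {x : ℝ × ℝ}
    (hx : orient (q m) (q (m + 1)) x = 0) : x ∉ interior (convexHull ℝ (range q)) := by
  have hσ := hq.orient_mul_pos m
  refine notMem_interior_of_orient_eq_zero (z := q (m + 2)) (convexHull_min ?_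
    (convex_setOf_nonneg_mul_orient _ _ _)) (mul_self_pos.2 (left_ne_zero_of_mul hσ.ne')) hx
  rintro _ ⟨j, rfl⟩
  rw [mem_ofPred_eq]
  have hj : ∀ m j : Fin 4, j = m ∨ j = m + 1 ∨ j = m + 2 ∨ j = m + 3 := by decide
  rcases hj m j with rfl | rfl | rfl | rfl
  · simp
  · simp
  · exact mul_self_nonneg _
  · exact hσ.le

theorem eq_add_three_of_adjacent_halfedges (hq : IsConvexQuad q) {s v w : Fin 4} {b p : ℝ × ℝ}
    (hb : b ∈ openSegment ℝ (q s) (q (s + 1)))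
    (hp : p ∈ openSegment ℝ (q (s + 1)) (q (s + 1 + 1)))
    (hv : s ≠ v ∧ s + 1 ≠ v) (hw : s + 1 ≠ w ∧ s + 1 + 1 ≠ w)
    (hin : openSegment ℝ (q w) p ⊆ interior (convexHull ℝ (range q)))
    (hdisj : Disjoint (openSegment ℝ (q v) b) (openSegment ℝ (q w) p)) :
    v = s + 3 ∧ w = s + 3 := by
  have hK := convex_convexHull ℝ (range q)
  have hvK : q v ∈ convexHull ℝ (range q) \ interior (convexHull ℝ (range q)) :=
    ⟨subset_convexHull ℝ _ (mem_range_self v), hq.notMem_interior_convexHull v (by simp)⟩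
  have hbK : b ∈ convexHull ℝ (range q) \ interior (convexHull ℝ (range q)) :=
    ⟨hK.openSegment_subset (subset_convexHull ℝ _ (mem_range_self _))
      (subset_convexHull ℝ _ (mem_range_self _)) hb,
      hq.notMem_interior_convexHull s (orient_eq_zero_of_mem_openSegment hb)⟩
  have hcross : ¬ orient (q v) b (q w) * orient (q v) b p < 0 := fun h =>
    not_disjoint_iff_nonempty_inter.2
      (openSegment_inter_nonempty_of_orient_mul_neg hK hvK hbK hin h) hdisj
  obtain ⟨σ, hσ⟩ := hq.exists_pos_mul_orient
  have h₀ := hσ s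
  have h₁ := hσ (s + 1)
  have h₂ := hσ (s + 2)
  have h₃ := hσ (s + 3)
  have hw' := Fin.eq_add_two_or_eq_add_three hw
  simp only [add_assoc, Fin.reduceAdd, add_zero] at h₁ h₂ h₃ hp hw'
  rcases Fin.eq_add_two_or_eq_add_three hv with rfl | rfl <;> rcases hw' with rfl | rfl
  · exact (hcross (orient_mul_neg₂₃ hb hp h₀ h₁ h₂)).elim
  · exact (hcross (orient_mul_neg₂₀ hb hp (right_ne_zero_of_mul h₀.ne'))).elim
  · exact ⟨rfl, rfl⟩
  · exact (hcross (orient_mul_neg₃₀ hb hp h₁ h₂ h₃)).elim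

end IsConvexQuad

/-- A quadrilateral face of a 1-plane drawing contains at most two halfedges.
`q 0, q 1, q 2, q 3` are the vertices of a convex quadrilateral (in cyclic order:
for each side, the remaining two vertices lie strictly on the same side of its line).
There are `N` halfedges: the `i`-th goes from the vertex `q (vtx i)` to the point
`pt i`, which is an interior point of the non-adjacent side with endpoints
`q (side i)` and `q (side i + 1)`.  Each side is crossed by (i.e. carries the endpoint
of) at most one halfedge, the halfedges are pairwise non-crossing, and each halfedge
lies inside the quadrilateral.  Then `N ≤ 2`. -/
theorem stmt7 (q : Fin 4 → ℝ × ℝ)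
    (hconvex : ∀ i : Fin 4, (affineSpan ℝ {q i, q (i + 1)}).SSameSide (q (i + 2)) (q (i + 3)))
    (N : ℕ) (vtx : Fin N → Fin 4) (pt : Fin N → ℝ × ℝ) (side : Fin N → Fin 4)
    (hpt : ∀ i, pt i ∈ openSegment ℝ (q (side i)) (q (side i + 1)))
    (hnonadj : ∀ i, side i ≠ vtx i ∧ side i + 1 ≠ vtx i)
    (hsideinj : Function.Injective side)
    (hin : ∀ i, openSegment ℝ (q (vtx i)) (pt i) ⊆ interior (convexHull ℝ (Set.range q)))
    (hnc : ∀ i j, i ≠ j →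
      openSegment ℝ (q (vtx i)) (pt i) ∩ openSegment ℝ (q (vtx j)) (pt j) = ∅) :
    N ≤ 2 := by
  by_contra! hN
  have hadj : ∀ {i j}, side j = side i + 1 → vtx i = side i + 3 ∧ vtx j = side i + 3 := by
    intro i j h
    have hij : i ≠ j := by rintro rfl; simp at h
    exact IsConvexQuad.eq_add_three_of_adjacent_halfedges hconvex (hpt i) (h ▸ hpt j) (hnonadj i)
      (h ▸ hnonadj j) (hin j) (disjoint_iff_inter_eq_empty.2 (hnc i j hij))
  obtain ⟨i, j, k, hij, hjk⟩ := hsideinj.exists_add_one_add_one hN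
  have h := (hadj hij).2.symm.trans (hadj hjk).1
  rw [hij] at h
  simp [add_assoc] at h
end

section
/- Suppose every vertex of a graph H with f₄ ≥ n/4 vertices lies in exactly two maximal chains, the total length (number of vertices, with multiplicity) of all maximal chains is 2f₄ ≥ n/2, and any two distinct maximal chains through vertices of a common chain are pairwise distinct. Then there are at least √(n/2) different maximal chains. -/
/-- Let `V` be the set of the `f₄ ≥ n/4` vertices of the auxiliary graph `H` of rhombus
faces and let `𝒞` be the collection of maximal chains (given by their vertex sets).
Every vertex lies in exactly two maximal chains, so the total length of all maximal
chains is `2f₄ ≥ n/2`, and any two distinct maximal chains through distinct vertices of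
a common chain are distinct.  Then there are at least `√(n/2)` different maximal
chains. -/
theorem stmt12 {α : Type*} [DecidableEq α] (n f4 : ℕ) (V : Finset α)
    (𝒞 : Finset (Finset α))
    (hV : V.card = f4) (h4 : 4 * f4 ≥ n)
    (hsub : ∀ C ∈ 𝒞, C ⊆ V ∧ C.Nonempty)
    (hlen : ∑ C ∈ 𝒞, C.card = 2 * f4)
    (htwo : ∀ v ∈ V, (𝒞.filter (fun C => v ∈ C)).card = 2)
    (hdistinct : ∀ C ∈ 𝒞, ∀ u ∈ C, ∀ v ∈ C, u ≠ v →
      ∀ D ∈ 𝒞, ∀ D' ∈ 𝒞, D ≠ C → D' ≠ C → u ∈ D → v ∈ D' → D ≠ D') :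
    Real.sqrt ((n : ℝ) / 2) ≤ (𝒞.card : ℝ) := by
  classical
  have key : (n : ℝ) / 2 ≤ (𝒞.card : ℝ) ^ 2 := by
    rcases 𝒞.eq_empty_or_nonempty with h | h
    · have h0 : 2 * f4 = 0 := by simpa [h] using hlen.symm
      have : n = 0 := by omega
      simp [this]
    · obtain ⟨C, hC, hmax⟩ := 𝒞.exists_max_image (fun D => D.card) h
      have hCsub := (hsub C hC).1
      set f : α → Finset α := fun v =>
        if hv : ((𝒞.filter (fun D => v ∈ D)).erase C).Nonempty then hv.choose else C with hf
      have hfmem : ∀ v ∈ C, f v ∈ (𝒞.filter (fun D => v ∈ D)).erase C := by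
        intro v hv
        have hC' : C ∈ 𝒞.filter (fun D => v ∈ D) := by simp [hC, hv]
        have h2 := htwo v (hCsub hv)
        have hpos : 0 < ((𝒞.filter (fun D => v ∈ D)).erase C).card := by
          rw [Finset.card_erase_of_mem hC', h2]; norm_num
        have hne : ((𝒞.filter (fun D => v ∈ D)).erase C).Nonempty :=
          Finset.card_pos.mp hpos
        simpa [hf, hne] using hne.choose_spec
      have hinj : Set.InjOn f C := by
        intro u hu v hv huv
        by_contra hne
        have hu' := hfmem u hu
        have hv' := hfmem v hv
        simp only [Finset.mem_erase, Finset.mem_filter] at hu' hv'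
        rw [huv] at hu'
        exact (hdistinct C hC u hu v hv hne (f v) hu'.2.1 (f v) hv'.2.1 hu'.1 hv'.1
          hu'.2.2 hv'.2.2) rfl
      have hcard : C.card ≤ (𝒞.erase C).card := by
        apply Finset.card_le_card_of_injOn f _ hinj
        intro v hv
        have := hfmem v hv
        simp only [Finset.mem_erase, Finset.mem_filter] at this
        exact Finset.mem_erase.mpr ⟨this.1, this.2.1⟩
      have hlt : C.card + 1 ≤ 𝒞.card := by
        have := Finset.card_erase_of_mem hC
        have hpos : 0 < 𝒞.card := Finset.card_pos.mpr h
        omega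
      have hsum : 2 * f4 ≤ 𝒞.card * C.card := by
        rw [← hlen]
        calc ∑ D ∈ 𝒞, D.card ≤ ∑ D ∈ 𝒞, C.card := Finset.sum_le_sum hmax
          _ = 𝒞.card * C.card := by rw [Finset.sum_const, smul_eq_mul]
      have hn : n ≤ 2 * 𝒞.card ^ 2 := by nlinarith
      have := (Nat.cast_le (α := ℝ)).mpr hn
      push_cast at this
      linarith
  have h := Real.sqrt_le_sqrt key
  rwa [Real.sqrt_sq (by positivity)] at h
end

section
/- Let G be a directed geometric graph on n points in the plane in general position (no two points determine a horizontal or vertical direction), where every edge has positive slope, and each edge is doubled into a left-pointing and right-pointing copy. Define the continuation of a right edge e with right endpoint r as the left edge with right endpoint r immediately below e, and the continuation of a left edge e with left endpoint l as the right edge with left endpoint l immediately above e. Then every edge has at most one continuation, and iterating continuation never repeats an edge (each equivalence class under the transitive closure is a trail). -/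
/-- The slope of a directed segment. -/
noncomputable def slope2 (e : (ℝ × ℝ) × (ℝ × ℝ)) : ℝ :=
  (e.2.2 - e.1.2) / (e.2.1 - e.1.1)

/-- `f` is the continuation of the directed edge `e` in the edge set `E`:
if `e` points to the right (resp. left), then `f` starts at the head of `e`, points to
the left (resp. right), and is the edge immediately below (resp. above) `e`, i.e. the
one of smallest slope among the edges at that endpoint of larger slope than `e`. -/
def IsCont (E : Finset ((ℝ × ℝ) × (ℝ × ℝ))) (e f : (ℝ × ℝ) × (ℝ × ℝ)) : Prop :=
  f ∈ E ∧ f.1 = e.2 ∧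
    ((e.1.1 < e.2.1 ∧ f.2.1 < f.1.1) ∨ (e.2.1 < e.1.1 ∧ f.1.1 < f.2.1)) ∧
    slope2 e < slope2 f ∧
    ∀ g ∈ E, g.1 = e.2 →
      ((e.1.1 < e.2.1 ∧ g.2.1 < g.1.1) ∨ (e.2.1 < e.1.1 ∧ g.1.1 < g.2.1)) →
      slope2 e < slope2 g → slope2 f ≤ slope2 g

/-!
Continuation strictly increases the slope, so a continuation sequence has strictly increasing
slopes and cannot repeat an edge. Two continuations of the same edge have the same slope (each
is minimal among the candidates), the same tail and the same horizontal direction; being unit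
segments, they coincide.
-/

theorem Prod.eq_of_sum_sq_eq_of_parallel {u v : ℝ × ℝ} (hx : 0 < u.1 * v.1)
    (hpar : u.2 * v.1 = v.2 * u.1) (hlen : u.1 ^ 2 + u.2 ^ 2 = v.1 ^ 2 + v.2 ^ 2) : u = v := by
  have hN : 0 < u.1 ^ 2 + u.2 ^ 2 := by nlinarith [sq_nonneg u.2, sq_nonneg (u.1 + v.1)]
  have hsq : u.1 ^ 2 = v.1 ^ 2 := by
    have : (u.1 ^ 2 - v.1 ^ 2) * (u.1 ^ 2 + u.2 ^ 2) = 0 := by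
      linear_combination u.1 ^ 2 * hlen - (u.2 * v.1 + v.2 * u.1) * hpar
    exact sub_eq_zero.mp ((mul_eq_zero.mp this).resolve_right hN.ne')
  have h1 : u.1 = v.1 := by
    rcases sq_eq_sq_iff_eq_or_eq_neg.mp hsq with h | h <;> [exact h; nlinarith]
  have hu1 : u.1 ≠ 0 := left_ne_zero_of_mul hx.ne'
  refine Prod.ext h1 (mul_right_cancel₀ hu1 ?_)
  rw [mul_comm, ← h1] at hpar
  linarith

namespace IsCont

variable {E : Finset ((ℝ × ℝ) × (ℝ × ℝ))} {e f f' : (ℝ × ℝ) × (ℝ × ℝ)}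

theorem slope_lt (h : IsCont E e f) : slope2 e < slope2 f :=
  h.2.2.2.1

theorem slope_eq (hf : IsCont E e f) (hf' : IsCont E e f') : slope2 f = slope2 f' :=
  le_antisymm (hf.2.2.2.2 f' hf'.1 hf'.2.1 hf'.2.2.1 hf'.2.2.2.1)
    (hf'.2.2.2.2 f hf.1 hf.2.1 hf.2.2.1 hf.2.2.2.1)

theorem dx_mul_pos (hf : IsCont E e f) (hf' : IsCont E e f') :
    0 < (f.2.1 - f.1.1) * (f'.2.1 - f'.1.1) := by
  rcases hf.2.2.1 with ⟨he, h⟩ | ⟨he, h⟩ <;> rcases hf'.2.2.1 with ⟨he', h'⟩ | ⟨he', h'⟩ <;>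
    nlinarith

theorem eq (hunit : ∀ g ∈ E, (g.2.1 - g.1.1) ^ 2 + (g.2.2 - g.1.2) ^ 2 = 1)
    (hf : IsCont E e f) (hf' : IsCont E e f') : f = f' := by
  have hx := hf.dx_mul_pos hf'
  have hpar : (f.2.2 - f.1.2) * (f'.2.1 - f'.1.1) = (f'.2.2 - f'.1.2) * (f.2.1 - f.1.1) := by
    have := hf.slope_eq hf'
    rwa [slope2, slope2, div_eq_div_iff (left_ne_zero_of_mul hx.ne') (right_ne_zero_of_mul hx.ne')]
      at this
  have hlen : (f.2.1 - f.1.1) ^ 2 + (f.2.2 - f.1.2) ^ 2 =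
      (f'.2.1 - f'.1.1) ^ 2 + (f'.2.2 - f'.1.2) ^ 2 := by
    rw [hunit f hf.1, hunit f' hf'.1]
  have hvec : f.2 - f.1 = f'.2 - f'.1 :=
    Prod.eq_of_sum_sq_eq_of_parallel (u := f.2 - f.1) (v := f'.2 - f'.1) hx hpar hlen
  have htail : f.1 = f'.1 := hf.2.1.trans hf'.2.1.symm
  rw [htail] at hvec
  exact Prod.ext htail (sub_left_injective hvec)

end IsCont

theorem injective_of_isCont_chain {E : Finset ((ℝ × ℝ) × (ℝ × ℝ))} {m : ℕ}
    {c : Fin (m + 1) → (ℝ × ℝ) × (ℝ × ℝ)} (hc : ∀ i : Fin m, IsCont E (c i.castSucc) (c i.succ)) :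
    Function.Injective c :=
  have hmono : StrictMono (slope2 ∘ c) := Fin.strictMono_iff_lt_succ.mpr fun i => (hc i).slope_lt
  hmono.injective.of_comp

theorem stmt16_general (P : Finset (ℝ × ℝ)) (E : Finset ((ℝ × ℝ) × (ℝ × ℝ)))
    (hE : ∀ e ∈ E, e.1 ∈ P ∧ e.2 ∈ P ∧
      0 < (e.2.1 - e.1.1) * (e.2.2 - e.1.2) ∧
      (e.2.1 - e.1.1) ^ 2 + (e.2.2 - e.1.2) ^ 2 = 1) :
    (∀ e ∈ E, ∀ f f', IsCont E e f → IsCont E e f' → f = f') ∧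
    (∀ m : ℕ, ∀ c : Fin (m + 1) → (ℝ × ℝ) × (ℝ × ℝ),
      (∀ i, c i ∈ E) → (∀ i : Fin m, IsCont E (c i.castSucc) (c i.succ)) →
      Function.Injective c) :=
  ⟨fun _ _ _ _ hf hf' => hf.eq (fun g hg => (hE g hg).2.2.2) hf',
    fun _ _ _ hc => injective_of_isCont_chain hc⟩

/-- Let `E` be the directed edges (both orientations of each unit segment) of a
geometric graph on a point set `P` in general position (no two points share an `x`- or
`y`-coordinate), all edges being unit segments of positive slope.  Then every edge has
at most one continuation, and iterating the continuation operation never repeats an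
edge: every continuation sequence is injective (each equivalence class is a trail). -/
theorem stmt16 (P : Finset (ℝ × ℝ)) (E : Finset ((ℝ × ℝ) × (ℝ × ℝ)))
    (hgen : ∀ p ∈ P, ∀ q ∈ P, p ≠ q → p.1 ≠ q.1 ∧ p.2 ≠ q.2)
    (hE : ∀ e ∈ E, e.1 ∈ P ∧ e.2 ∈ P ∧
      0 < (e.2.1 - e.1.1) * (e.2.2 - e.1.2) ∧
      (e.2.1 - e.1.1) ^ 2 + (e.2.2 - e.1.2) ^ 2 = 1)
    (hdouble : ∀ e ∈ E, Prod.swap e ∈ E) :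
    (∀ e ∈ E, ∀ f f', IsCont E e f → IsCont E e f' → f = f') ∧
    (∀ m : ℕ, ∀ c : Fin (m + 1) → (ℝ × ℝ) × (ℝ × ℝ),
      (∀ i, c i ∈ E) → (∀ i : Fin m, IsCont E (c i.castSucc) (c i.succ)) →
      Function.Injective c) :=
  stmt16_general P E hE
end

section
/- With continuations of directed edges as defined (via lowest/highest edges at shared endpoints), if (e₁, e₂, …, e_m) is a sequence where each e_{i+1} is the continuation of e_i, then for all i and j with j ≥ i+2 the bounding box R(e_j) satisfies x₁(R(e_i)) < x₁(R(e_j)) < x₂(R(e_j)) < x₂(R(e_i)) and y₁(R(e_j)) < y₁(R(e_i)) < y₂(R(e_i)) < y₂(R(e_j)); consequently e₁, e₃, e₅, … are pairwise crossing independent edges. -/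
/-- The bounding-box relation between a right edge and its continuation:
`x₁(R(e)) < x₁(R(f)) < x₂(R(f)) = x₂(R(e))` and
`y₁(R(f)) < y₁(R(e)) < y₂(R(e)) = y₂(R(f))`, where edge `i` has bounding box with
lower-left corner `a i` and upper-right corner `b i`. -/
def BoxStepRight (a b : ℕ → ℝ × ℝ) (i : ℕ) : Prop :=
  (a i).1 < (a (i + 1)).1 ∧ (b (i + 1)).1 = (b i).1 ∧
  (a (i + 1)).2 < (a i).2 ∧ (b i).2 = (b (i + 1)).2

/-- The bounding-box relation between a left edge and its continuation. -/
def BoxStepLeft (a b : ℕ → ℝ × ℝ) (i : ℕ) : Prop :=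
  (a i).1 = (a (i + 1)).1 ∧ (b (i + 1)).1 < (b i).1 ∧
  (a (i + 1)).2 = (a i).2 ∧ (b i).2 < (b (i + 1)).2

/-!
A right step moves the left side of the bounding box right and its bottom side down, keeping
the upper-right corner; a left step moves the right side left and the top side up, keeping the
lower-left corner. So every step weakly shrinks the `x`-projection and
weakly grows the `y`-projection, and two consecutive steps, being of opposite kinds, do both
strictly. Two positive-slope segments whose boxes are nested in this crossed way must meet:
over the `x`-range of the inner segment, the line of the outer one starts above it and ends
below it.
-/

open Set

/-- The box with corners `r`, `s` lies inside the box with corners `p`, `q` horizontally and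
contains it vertically. -/
def CrossNested (p q r s : ℝ × ℝ) : Prop :=
  p.1 ≤ r.1 ∧ s.1 ≤ q.1 ∧ r.2 ≤ p.2 ∧ q.2 ≤ s.2

def StrictCrossNested (p q r s : ℝ × ℝ) : Prop :=
  p.1 < r.1 ∧ s.1 < q.1 ∧ r.2 < p.2 ∧ q.2 < s.2

namespace StrictCrossNested

variable {p q r s u v : ℝ × ℝ}

theorem trans_crossNested (h : StrictCrossNested p q r s) (h' : CrossNested r s u v) :
    StrictCrossNested p q u v := by
  obtain ⟨h₁, h₂, h₃, h₄⟩ := h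
  obtain ⟨h₁', h₂', h₃', h₄'⟩ := h'
  exact ⟨by linarith, by linarith, by linarith, by linarith⟩

theorem endpoints_ne (h : StrictCrossNested p q r s) (hpq : p.2 < q.2) :
    p ≠ r ∧ p ≠ s ∧ q ≠ r ∧ q ≠ s := by
  obtain ⟨h₁, h₂, h₃, h₄⟩ := h
  refine ⟨?_, ?_, ?_, ?_⟩ <;> rintro rfl <;> linarith

end StrictCrossNested

noncomputable def lineThrough (p q : ℝ × ℝ) (x : ℝ) : ℝ :=
  p.2 + (x - p.1) / (q.1 - p.1) * (q.2 - p.2)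

theorem lineThrough_right {p q : ℝ × ℝ} (h : p.1 < q.1) : lineThrough p q q.1 = q.2 := by
  have : q.1 - p.1 ≠ 0 := by linarith
  simp only [lineThrough, div_self this]
  ring

theorem lineThrough_strictMono {p q : ℝ × ℝ} (h₁ : p.1 < q.1) (h₂ : p.2 < q.2) :
    StrictMono (lineThrough p q) := by
  intro x y hxy
  have := sub_pos.2 h₁
  have := sub_pos.2 h₂
  unfold lineThrough
  gcongr

theorem mk_lineThrough_mem_openSegment {p q : ℝ × ℝ} {x : ℝ} (hx : x ∈ Ioo p.1 q.1) :
    (x, lineThrough p q x) ∈ openSegment ℝ p q := by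
  have hd : 0 < q.1 - p.1 := by linarith [hx.1, hx.2]
  rw [openSegment_eq_image']
  refine ⟨(x - p.1) / (q.1 - p.1), ⟨div_pos (by linarith [hx.1]) hd, ?_⟩, ?_⟩
  · rw [div_lt_one hd]
    linarith [hx.2]
  · ext
    · simp only [Prod.fst_add, Prod.smul_fst, Prod.fst_sub, smul_eq_mul]
      field_simp
      ring
    · simp only [lineThrough, Prod.snd_add, Prod.smul_snd, Prod.snd_sub, smul_eq_mul]

theorem StrictCrossNested.openSegment_inter_nonempty {p q r s : ℝ × ℝ}
    (h : StrictCrossNested p q r s) (hpq : p.2 < q.2) (hrs : r.1 < s.1) :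
    (openSegment ℝ p q ∩ openSegment ℝ r s).Nonempty := by
  obtain ⟨h₁, h₂, h₃, h₄⟩ := h
  have hp : p.1 < q.1 := by linarith
  have hr2 : r.2 < s.2 := by linarith
  set d : ℝ → ℝ := fun x ↦ lineThrough p q x - lineThrough r s x
  have hd_left : 0 < d r.1 := by
    have : lineThrough p q p.1 < lineThrough p q r.1 := lineThrough_strictMono hp hpq h₁
    simp only [d, lineThrough, sub_self, zero_div, zero_mul, add_zero] at this ⊢
    linarith
  have hd_right : d s.1 < 0 := by
    have := lineThrough_strictMono hp hpq h₂
    simp only [d, lineThrough_right hp, lineThrough_right hrs] at this ⊢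
    linarith
  have hd_cont : ContinuousOn d (Icc r.1 s.1) := by
    unfold d lineThrough
    fun_prop
  obtain ⟨x, hx, hdx⟩ := intermediate_value_Ioo' hrs.le hd_cont ⟨hd_right, hd_left⟩
  refine ⟨(x, lineThrough p q x), mk_lineThrough_mem_openSegment ⟨?_, ?_⟩, ?_⟩
  · linarith [hx.1]
  · linarith [hx.2]
  · rw [show lineThrough p q x = lineThrough r s x from sub_eq_zero.1 hdx]
    exact mk_lineThrough_mem_openSegment hx

section ContinuationSequence

variable {a b : ℕ → ℝ × ℝ} {m : ℕ}

theorem BoxStepRight.crossNested {i : ℕ} (h : BoxStepRight a b i) :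
    CrossNested (a i) (b i) (a (i + 1)) (b (i + 1)) :=
  ⟨h.1.le, h.2.1.le, h.2.2.1.le, h.2.2.2.le⟩

theorem BoxStepLeft.crossNested {i : ℕ} (h : BoxStepLeft a b i) :
    CrossNested (a i) (b i) (a (i + 1)) (b (i + 1)) :=
  ⟨h.1.le, h.2.1.le, h.2.2.1.le, h.2.2.2.le⟩

theorem BoxStepRight.strictCrossNested_of_boxStepLeft {i : ℕ} (h : BoxStepRight a b i)
    (h' : BoxStepLeft a b (i + 1)) : StrictCrossNested (a i) (b i) (a (i + 2)) (b (i + 2)) := by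
  obtain ⟨h₁, h₂, h₃, h₄⟩ := h
  obtain ⟨h₁', h₂', h₃', h₄'⟩ := h'
  exact ⟨by linarith, by linarith, by linarith, by linarith⟩

theorem BoxStepLeft.strictCrossNested_of_boxStepRight {i : ℕ} (h : BoxStepLeft a b i)
    (h' : BoxStepRight a b (i + 1)) : StrictCrossNested (a i) (b i) (a (i + 2)) (b (i + 2)) := by
  obtain ⟨h₁, h₂, h₃, h₄⟩ := h
  obtain ⟨h₁', h₂', h₃', h₄'⟩ := h'
  exact ⟨by linarith, by linarith, by linarith, by linarith⟩

def AlternatingBoxSteps (m : ℕ) (a b : ℕ → ℝ × ℝ) : Prop :=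
  (∀ i, i + 1 < m → (Even i → BoxStepRight a b i) ∧ (Odd i → BoxStepLeft a b i)) ∨
  (∀ i, i + 1 < m → (Even i → BoxStepLeft a b i) ∧ (Odd i → BoxStepRight a b i))

namespace AlternatingBoxSteps

theorem crossNested (h : AlternatingBoxSteps m a b) {i : ℕ} (hi : i + 1 < m) :
    CrossNested (a i) (b i) (a (i + 1)) (b (i + 1)) := by
  rcases h with h | h <;> rcases Nat.even_or_odd i with hi' | hi'
  · exact ((h i hi).1 hi').crossNested
  · exact ((h i hi).2 hi').crossNested
  · exact ((h i hi).1 hi').crossNested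
  · exact ((h i hi).2 hi').crossNested

theorem strictCrossNested_two (h : AlternatingBoxSteps m a b) {i : ℕ} (hi : i + 2 < m) :
    StrictCrossNested (a i) (b i) (a (i + 2)) (b (i + 2)) := by
  have hi₁ : i + 1 < m := by omega
  rcases h with h | h <;> rcases Nat.even_or_odd i with hi' | hi'
  · exact ((h i hi₁).1 hi').strictCrossNested_of_boxStepLeft ((h (i + 1) hi).2 hi'.add_one)
  · exact ((h i hi₁).2 hi').strictCrossNested_of_boxStepRight ((h (i + 1) hi).1 hi'.add_one)
  · exact ((h i hi₁).1 hi').strictCrossNested_of_boxStepRight ((h (i + 1) hi).2 hi'.add_one)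
  · exact ((h i hi₁).2 hi').strictCrossNested_of_boxStepLeft ((h (i + 1) hi).1 hi'.add_one)

theorem strictCrossNested (h : AlternatingBoxSteps m a b) {i j : ℕ} (hij : i + 2 ≤ j)
    (hj : j < m) : StrictCrossNested (a i) (b i) (a j) (b j) := by
  induction j, hij using Nat.le_induction with
  | base => exact h.strictCrossNested_two hj
  | succ j hij ih => exact (ih (by omega)).trans_crossNested (h.crossNested hj)

end AlternatingBoxSteps

end ContinuationSequence

/-- Let `e₀, …, e_{m-1}` be a continuation sequence of edges of positive slope, the
`i`-th edge being the segment from `a i` (lower-left corner of its bounding box) to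
`b i` (upper-right corner), alternating between right and left edges so that each
consecutive pair satisfies the corresponding bounding-box relation.  Then for all
`i, j` with `j ≥ i + 2` the bounding boxes satisfy
`x₁(R(eᵢ)) < x₁(R(eⱼ)) < x₂(R(eⱼ)) < x₂(R(eᵢ))` and
`y₁(R(eⱼ)) < y₁(R(eᵢ)) < y₂(R(eᵢ)) < y₂(R(eⱼ))`; consequently such `eᵢ` and `eⱼ`
(in particular `e₁, e₃, e₅, …`) are pairwise crossing independent edges. -/
theorem stmt17 (m : ℕ) (a b : ℕ → ℝ × ℝ)
    (hpos : ∀ i < m, (a i).1 < (b i).1 ∧ (a i).2 < (b i).2)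
    (hstep :
      (∀ i, i + 1 < m → (Even i → BoxStepRight a b i) ∧ (Odd i → BoxStepLeft a b i)) ∨
      (∀ i, i + 1 < m → (Even i → BoxStepLeft a b i) ∧ (Odd i → BoxStepRight a b i))) :
    ∀ i j, i + 2 ≤ j → j < m →
      ((a i).1 < (a j).1 ∧ (a j).1 < (b j).1 ∧ (b j).1 < (b i).1 ∧
        (a j).2 < (a i).2 ∧ (a i).2 < (b i).2 ∧ (b i).2 < (b j).2) ∧
      (openSegment ℝ (a i) (b i) ∩ openSegment ℝ (a j) (b j)).Nonempty ∧
      a i ≠ a j ∧ a i ≠ b j ∧ b i ≠ a j ∧ b i ≠ b j := by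
  intro i j hij hj
  have hnest : StrictCrossNested (a i) (b i) (a j) (b j) :=
    AlternatingBoxSteps.strictCrossNested hstep hij hj
  obtain ⟨-, hi₂⟩ := hpos i (by omega)
  obtain ⟨hj₁, -⟩ := hpos j hj
  exact ⟨⟨hnest.1, hj₁, hnest.2.1, hnest.2.2.1, hi₂, hnest.2.2.2⟩, hnest.openSegment_inter_nonempty hi₂ hj₁,
    hnest.endpoints_ne hi₂⟩
end

section
/- Let G be a geometric graph on the points of a √n × √n integer grid whose edges are the segments of length √r in k−1 fixed directions, where r = a² + b² has at least k−1 representations as a sum of two coprime squares. Then no two edges of the same direction cross, hence G contains no k pairwise crossing edges, and G has (k−1)n − o(n) edges. -/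
lemma aux_no_cross (d p q : ℤ × ℤ) (hgcd : IsCoprime d.1 d.2) (hne : p ≠ q) :
    openSegment ℝ ((p.1:ℝ), (p.2:ℝ)) (((p+d).1:ℝ), ((p+d).2:ℝ)) ∩
    openSegment ℝ ((q.1:ℝ), (q.2:ℝ)) (((q+d).1:ℝ), ((q+d).2:ℝ)) = ∅ := by
  rw [Set.eq_empty_iff_forall_notMem]
  rintro z ⟨hz1, hz2⟩
  rw [openSegment_eq_image] at hz1 hz2
  obtain ⟨θ, hθ, hzθ⟩ := hz1
  obtain ⟨φ, hφ, hzφ⟩ := hz2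
  simp only [Set.mem_Ioo] at hθ hφ
  obtain ⟨u, v, huv⟩ := hgcd
  have hE := hzθ.trans hzφ.symm
  have h1 : ((q.1:ℝ) - p.1) = (θ - φ) * d.1 := by
    have := congrArg Prod.fst hE
    simp [Prod.smul_fst, Prod.fst_add, smul_eq_mul] at this
    nlinarith [this]
  have h2 : ((q.2:ℝ) - p.2) = (θ - φ) * d.2 := by
    have := congrArg Prod.snd hE
    simp [Prod.smul_snd, Prod.snd_add, smul_eq_mul] at this
    nlinarith [this]
  set c : ℝ := θ - φ with hc
  have hm : ((u * (q.1 - p.1) + v * (q.2 - p.2) : ℤ) : ℝ) = c := by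
    push_cast
    rw [h1, h2]
    have : ((u * d.1 + v * d.2 : ℤ) : ℝ) = 1 := by rw [huv]; norm_num
    push_cast at this
    nlinarith [this]
  have habs : |(u * (q.1 - p.1) + v * (q.2 - p.2) : ℤ)| < 1 := by
    have : |((u * (q.1 - p.1) + v * (q.2 - p.2) : ℤ) : ℝ)| < 1 := by
      rw [hm]; rw [abs_lt]; constructor <;> nlinarith
    exact_mod_cast this
  have hm0 : (u * (q.1 - p.1) + v * (q.2 - p.2) : ℤ) = 0 := Int.abs_lt_one_iff.mp habs
  have hc0 : c = 0 := by rw [← hm, hm0]; norm_num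
  apply hne
  have e1 : q.1 = p.1 := by
    have : ((q.1:ℝ) - p.1) = 0 := by rw [h1, hc0]; ring
    have := sub_eq_zero.mp this
    exact_mod_cast this
  have e2 : q.2 = p.2 := by
    have : ((q.2:ℝ) - p.2) = 0 := by rw [h2, hc0]; ring
    have := sub_eq_zero.mp this
    exact_mod_cast this
  exact Prod.ext e1.symm e2.symm

lemma aux_ico (s : ℕ) (c : ℤ) (hc : c^2 < (s:ℤ)^2) :
    (((Finset.Ico (0:ℤ) (s:ℤ)).filter (fun x => x + c ∈ Finset.Ico (0:ℤ) (s:ℤ))).card : ℤ)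
      = (s:ℤ) - |c| := by
  have habs : |c| < (s:ℤ) := by
    rcases abs_cases c with ⟨h1,h2⟩|⟨h1,h2⟩ <;> nlinarith
  have h : (Finset.Ico (0:ℤ) (s:ℤ)).filter (fun x => x + c ∈ Finset.Ico (0:ℤ) (s:ℤ))
      = Finset.Ico (max 0 (-c)) (min (s:ℤ) ((s:ℤ) - c)) := by
    ext x
    simp only [Finset.mem_filter, Finset.mem_Ico, lt_min_iff, max_le_iff, le_max_iff,
      Finset.mem_Ico]
    omega
  rw [h, Int.card_Ico]
  rcases abs_cases c with ⟨h1,h2⟩|⟨h1,h2⟩ <;> omega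

/-- Let `G` be the geometric graph on the `n = s·s` points of the `√n × √n` integer
grid whose edges are the segments of length `√r` in the `k - 1` fixed directions `D`,
where each direction `d ∈ D` satisfies `r = d₁² + d₂²` with `d₁, d₂` coprime (and no
two chosen directions are parallel).  Then no two edges of the same direction cross,
hence `G` contains no `k` pairwise crossing edges, and `G` has at least
`(k-1)·n − 2(k-1)·√(rn)` edges (that is, `(k-1)n − o(n)` edges). -/
theorem stmt19 (s n k r : ℕ) (hn : n = s * s) (hk : 2 ≤ k) (hr : 0 < r) (hrn : r < n)
    (D : Finset (ℤ × ℤ)) (hD : D.card = k - 1)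
    (hDrep : ∀ d ∈ D, d.1 ^ 2 + d.2 ^ 2 = (r : ℤ) ∧ Int.gcd d.1 d.2 = 1)
    (hDsign : ∀ d ∈ D, -d ∉ D) :
    ∀ grid : Finset (ℤ × ℤ), grid = Finset.Ico (0 : ℤ) (s : ℤ) ×ˢ Finset.Ico (0 : ℤ) (s : ℤ) →
    ∀ E : Finset ((ℤ × ℤ) × (ℤ × ℤ)), E = (grid ×ˢ grid).filter (fun e => e.2 - e.1 ∈ D) →
    ∀ toR : ℤ × ℤ → ℝ × ℝ, toR = (fun p => ((p.1 : ℝ), (p.2 : ℝ))) →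
    ((∀ e ∈ E, ∀ f ∈ E, e ≠ f → e.2 - e.1 = f.2 - f.1 →
        openSegment ℝ (toR e.1) (toR e.2) ∩ openSegment ℝ (toR f.1) (toR f.2) = ∅) ∧
      (¬ ∃ S ⊆ E, S.card = k ∧ ∀ e ∈ S, ∀ f ∈ S, e ≠ f →
        (openSegment ℝ (toR e.1) (toR e.2) ∩ openSegment ℝ (toR f.1) (toR f.2)).Nonempty) ∧
      ((k : ℝ) - 1) * n - 2 * ((k : ℝ) - 1) * Real.sqrt (r * n) ≤ (E.card : ℝ)) := by
  intro grid hgrid E hE toR htoR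
  -- Part 1
  have part1 : ∀ e ∈ E, ∀ f ∈ E, e ≠ f → e.2 - e.1 = f.2 - f.1 →
      openSegment ℝ (toR e.1) (toR e.2) ∩ openSegment ℝ (toR f.1) (toR f.2) = ∅ := by
    intro e he f hf hne hdir
    rw [hE, Finset.mem_filter] at he hf
    have hcop : IsCoprime (e.2 - e.1).1 (e.2 - e.1).2 :=
      Int.isCoprime_iff_gcd_eq_one.mpr (hDrep _ he.2).2
    have hne1 : e.1 ≠ f.1 := by
      intro h
      apply hne
      have h2 : e.2 = f.2 := by
        have := hdir
        rw [h] at this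
        exact sub_left_injective this
      exact Prod.ext h h2
    have key := aux_no_cross (e.2 - e.1) e.1 f.1 hcop hne1
    have he2 : e.1 + (e.2 - e.1) = e.2 := by ring
    have hf2 : f.1 + (e.2 - e.1) = f.2 := by rw [hdir]; ring
    rw [he2, hf2] at key
    rw [htoR]
    exact key
  refine ⟨part1, ?_, ?_⟩
  · -- Part 2
    rintro ⟨S, hSE, hSk, hScross⟩
    have hmap : ∀ e ∈ S, e.2 - e.1 ∈ D := by
      intro e he
      have := hSE he
      rw [hE, Finset.mem_filter] at this
      exact this.2
    have hlt : D.card < S.card := by rw [hSk, hD]; omega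
    obtain ⟨e, he, f, hf, hne, heq⟩ :=
      Finset.exists_ne_map_eq_of_card_lt_of_maps_to hlt hmap
    have hnon := hScross e he f hf hne
    rw [part1 e (hSE he) f (hSE hf) hne heq] at hnon
    exact Set.not_nonempty_empty hnon
  · -- Part 3
    set A := Finset.Ico (0:ℤ) (s:ℤ) with hA
    set S : ℤ × ℤ → Finset ((ℤ × ℤ) × (ℤ × ℤ)) :=
      fun d => ((A ×ˢ A).filter (fun p => p + d ∈ A ×ˢ A)).image (fun p => (p, p + d)) with hS
    have hsub : D.biUnion S ⊆ E := by
      intro x hx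
      simp only [hS, Finset.mem_biUnion, Finset.mem_image, Finset.mem_filter] at hx
      obtain ⟨d, hd, p, ⟨hp, hpd⟩, rfl⟩ := hx
      rw [hE, hgrid, Finset.mem_filter]
      refine ⟨Finset.mem_product.mpr ⟨hp, hpd⟩, ?_⟩
      simpa using hd
    have hdisj : ∀ d ∈ D, ∀ d' ∈ D, d ≠ d' → Disjoint (S d) (S d') := by
      intro d _ d' _ hne
      rw [Finset.disjoint_left]
      intro x hx hx'
      simp only [hS, Finset.mem_image, Finset.mem_filter] at hx hx'
      obtain ⟨p, _, rfl⟩ := hx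
      obtain ⟨q, _, hq⟩ := hx'
      apply hne
      have h1 : q = p := (Prod.ext_iff.mp hq).1
      have h2 : q + d' = p + d := (Prod.ext_iff.mp hq).2
      rw [h1] at h2
      exact (add_right_injective p h2).symm
    have hcard : (D.biUnion S).card = ∑ d ∈ D, (S d).card := Finset.card_biUnion hdisj
    have hScard : ∀ d : ℤ × ℤ, (S d).card =
        ((A.filter (fun x => x + d.1 ∈ A)).card * (A.filter (fun x => x + d.2 ∈ A)).card) := by
      intro d
      rw [hS]
      rw [Finset.card_image_of_injective _ (fun p q h => (Prod.ext_iff.mp h).1)]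
      have hsplit : (A ×ˢ A).filter (fun p => p + d ∈ A ×ˢ A)
          = (A.filter (fun x => x + d.1 ∈ A)) ×ˢ (A.filter (fun x => x + d.2 ∈ A)) := by
        ext ⟨x, y⟩
        simp only [Finset.mem_filter, Finset.mem_product, hA, Finset.mem_Ico, Prod.fst_add,
          Prod.snd_add]
        constructor
        · rintro ⟨⟨h1, h2⟩, h3, h4⟩; exact ⟨⟨h1, h3⟩, h2, h4⟩
        · rintro ⟨⟨h1, h3⟩, h2, h4⟩; exact ⟨⟨h1, h2⟩, h3, h4⟩
      rw [hsplit, Finset.card_product]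
    -- real bounds
    have hslt : (r:ℤ) < (s:ℤ)^2 := by
      have : r < s * s := hn ▸ hrn
      push_cast
      nlinarith [this]
    have hs0 : (0:ℝ) ≤ (s:ℝ) := Nat.cast_nonneg s
    have hsqrtn : Real.sqrt ((r:ℝ) * (n:ℝ)) = Real.sqrt r * s := by
      rw [hn]
      push_cast
      rw [Real.sqrt_mul (Nat.cast_nonneg r), Real.sqrt_mul_self hs0]
    have hterm : ∀ d ∈ D, (n:ℝ) - 2 * Real.sqrt ((r:ℝ) * (n:ℝ)) ≤ ((S d).card : ℝ) := by
      intro d hd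
      obtain ⟨hrep, _⟩ := hDrep d hd
      have h1sq : d.1^2 < (s:ℤ)^2 := by nlinarith [sq_nonneg d.2]
      have h2sq : d.2^2 < (s:ℤ)^2 := by nlinarith [sq_nonneg d.1]
      have c1 := aux_ico s d.1 h1sq
      have c2 := aux_ico s d.2 h2sq
      rw [hScard d]
      have hcast : (((A.filter (fun x => x + d.1 ∈ A)).card *
          (A.filter (fun x => x + d.2 ∈ A)).card : ℕ) : ℝ)
          = ((s:ℝ) - |(d.1:ℝ)|) * ((s:ℝ) - |(d.2:ℝ)|) := by
        have c1' : (((A.filter (fun x => x + d.1 ∈ A)).card : ℕ) : ℝ) = (s:ℝ) - |(d.1:ℝ)| := by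
          have := congrArg (fun z : ℤ => (z : ℝ)) c1
          push_cast at this
          simpa [hA] using this
        have c2' : (((A.filter (fun x => x + d.2 ∈ A)).card : ℕ) : ℝ) = (s:ℝ) - |(d.2:ℝ)| := by
          have := congrArg (fun z : ℤ => (z : ℝ)) c2
          push_cast at this
          simpa [hA] using this
        push_cast
        rw [c1', c2']
      rw [hcast, hsqrtn]
      have habs1 : |(d.1:ℝ)| ≤ Real.sqrt r := by
        rw [show (r:ℝ) = ((d.1^2 + d.2^2 : ℤ) : ℝ) by rw [hrep]; norm_cast]
        push_cast
        rw [show |(d.1:ℝ)| = Real.sqrt (|(d.1:ℝ)|^2) by rw [Real.sqrt_sq (abs_nonneg _)]]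
        apply Real.sqrt_le_sqrt
        rw [sq_abs]
        nlinarith [sq_nonneg ((d.2:ℝ))]
      have habs2 : |(d.2:ℝ)| ≤ Real.sqrt r := by
        rw [show (r:ℝ) = ((d.1^2 + d.2^2 : ℤ) : ℝ) by rw [hrep]; norm_cast]
        push_cast
        rw [show |(d.2:ℝ)| = Real.sqrt (|(d.2:ℝ)|^2) by rw [Real.sqrt_sq (abs_nonneg _)]]
        apply Real.sqrt_le_sqrt
        rw [sq_abs]
        nlinarith [sq_nonneg ((d.1:ℝ))]
      have hn' : (n:ℝ) = (s:ℝ) * (s:ℝ) := by rw [hn]; push_cast; ring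
      rw [hn']
      nlinarith [abs_nonneg (d.1:ℝ), abs_nonneg (d.2:ℝ),
        mul_nonneg (abs_nonneg (d.1:ℝ)) (abs_nonneg (d.2:ℝ)),
        mul_nonneg hs0 (sub_nonneg.mpr habs1), mul_nonneg hs0 (sub_nonneg.mpr habs2)]
    have hk1 : ((D.card : ℕ) : ℝ) = (k:ℝ) - 1 := by
      rw [hD]
      have : (1:ℕ) ≤ k := by omega
      push_cast [this]
      ring
    calc ((k:ℝ) - 1) * n - 2 * ((k:ℝ) - 1) * Real.sqrt ((r:ℕ) * (n:ℕ))
        = ∑ _d ∈ D, ((n:ℝ) - 2 * Real.sqrt ((r:ℝ) * (n:ℝ))) := by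
          rw [Finset.sum_const, nsmul_eq_mul, hk1]
          push_cast
          ring
      _ ≤ ∑ d ∈ D, ((S d).card : ℝ) := Finset.sum_le_sum hterm
      _ = ((∑ d ∈ D, (S d).card : ℕ) : ℝ) := by push_cast; ring
      _ = ((D.biUnion S).card : ℝ) := by rw [hcard]
      _ ≤ (E.card : ℝ) := by exact_mod_cast Finset.card_le_card hsub
end
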